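/- arXiv:2310.02393 — 3 statements merged into one kernel-verified Lean document; each statement's English description precedes it below -/
import Mathlib

section
/- Cleaning preserves functional equivalence: for any transition term f over an effective Boolean algebra A and any predicate β, if a ∈ ⟦β⟧ then the leaf of the restriction f|β for a equals the leaf of f for a. In particular f|⊤ is functionally equivalent to f. -/
open Classical

/-- An effective Boolean algebra over a domain `D` with predicates `P`. -/
structure EBA (D : Type*) (P : Type*) where
  den : P → Set D
  bot : P
  top : P
  band : P → P → P
  bor : P → P → P
  bnot : P → P
  den_bot : den bot = ∅
  den_top : den top = Set.univ
  den_and : ∀ α β, den (band α β) = den α ∩ den β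
  den_or : ∀ α β, den (bor α β) = den α ∪ den β
  den_not : ∀ α, den (bnot α) = (den α)ᶜ

/-- Transition terms over predicates `P` with leaves in `Φ`:
nested if-then-else expressions. -/
inductive TT (P : Type*) (Φ : Type*) where
  | leaf : Φ → TT P Φ
  | ite : P → TT P Φ → TT P Φ → TT P Φ

/-- The leaf of a transition term for an element `a` of the domain. -/
noncomputable def leafOf {D P Φ : Type*} (E : EBA D P) : TT P Φ → D → Φ
  | .leaf φ, _ => φ
  | .ite α f g, a => if a ∈ E.den α then leafOf E f a else leafOf E g a

/-- Lifting of a binary operation on leaves to transition terms. -/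
def liftBin {P Φ Φ' : Type*} (op : Φ → Φ → Φ') : TT P Φ → TT P Φ → TT P Φ'
  | .ite α f g, h => .ite α (liftBin op f h) (liftBin op g h)
  | .leaf φ, .ite α f g => .ite α (liftBin op (.leaf φ) f) (liftBin op (.leaf φ) g)
  | .leaf φ, .leaf ψ => .leaf (op φ ψ)

/-- Lifting of a unary operation on leaves to transition terms. -/
def liftUn {P Φ Φ' : Type*} (op : Φ → Φ') : TT P Φ → TT P Φ'
  | .leaf φ => .leaf (op φ)
  | .ite α f g => .ite α (liftUn op f) (liftUn op g)

/-- The restriction `f|β` of a transition term to a predicate `β`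
(cleaning eliminates dead branches using satisfiability in the algebra). -/
noncomputable def restr {D P Φ : Type*} (E : EBA D P) : TT P Φ → P → TT P Φ
  | .leaf φ, _ => .leaf φ
  | .ite α f g, β =>
    if E.den (E.band β α) = ∅ then restr E g β
    else if E.den (E.band β (E.bnot α)) = ∅ then restr E f β
    else .ite α (restr E f (E.band β α)) (restr E g (E.band β (E.bnot α)))

theorem cleaning_sound_aux {D P Φ : Type*} (E : EBA D P) :
    ∀ (f : TT P Φ) (β : P) (a : D), a ∈ E.den β →
      leafOf E (restr E f β) a = leafOf E f a := by
  intro f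
  induction f with
  | leaf φ => intro β a _; rfl
  | ite α f g ihf ihg =>
    intro β a ha
    simp only [restr]
    by_cases h1 : E.den (E.band β α) = ∅
    · simp only [h1, if_true]
      have hna : a ∉ E.den α := by
        intro h
        have : a ∈ E.den (E.band β α) := by rw [E.den_and]; exact ⟨ha, h⟩
        simp [h1] at this
      simp [leafOf, hna, ihg _ _ ha]
    · simp only [h1, if_false]
      by_cases h2 : E.den (E.band β (E.bnot α)) = ∅
      · simp only [h2, if_true]
        have haa : a ∈ E.den α := by
          by_contra h
          have : a ∈ E.den (E.band β (E.bnot α)) := by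
            rw [E.den_and, E.den_not]; exact ⟨ha, h⟩
          simp [h2] at this
        simp [leafOf, haa, ihf _ _ ha]
      · simp only [h2, if_false]
        by_cases haa : a ∈ E.den α
        · have : a ∈ E.den (E.band β α) := by rw [E.den_and]; exact ⟨ha, haa⟩
          simp [leafOf, haa, ihf _ _ this]
        · have : a ∈ E.den (E.band β (E.bnot α)) := by
            rw [E.den_and, E.den_not]; exact ⟨ha, haa⟩
          simp [leafOf, haa, ihg _ _ this]

/-- Cleaning preserves functional equivalence: for `a ∈ ⟦β⟧` the leaf of
`f|β` for `a` equals the leaf of `f` for `a`; in particular `f|⊤ ≐ f`. -/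
theorem cleaning_sound {D P Φ : Type*} (E : EBA D P) :
    (∀ (f : TT P Φ) (β : P) (a : D), a ∈ E.den β →
      leafOf E (restr E f β) a = leafOf E f a) ∧
    (∀ (f : TT P Φ) (a : D), leafOf E (restr E f E.top) a = leafOf E f a) := by
  exact ⟨cleaning_sound_aux E, fun f a =>
    cleaning_sound_aux E f E.top a (by rw [E.den_top]; trivial)⟩
end

section
/- Symbolic regex derivatives are correct: for every extended regular expression R modulo A and every element a ∈ D, the language of the leaf of the transition regex δ(R) for a equals the derivative of the language of R with respect to a: L(leaf(δ(R), a)) = {v | a·v ∈ L(R)}. -/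
open Classical

/-- Extended regular expressions modulo an algebra of predicates `P`. -/
inductive ERE (P : Type*) where
  | pred : P → ERE P
  | eps : ERE P
  | union : ERE P → ERE P → ERE P
  | inter : ERE P → ERE P → ERE P
  | concat : ERE P → ERE P → ERE P
  | star : ERE P → ERE P
  | compl : ERE P → ERE P

/-- The finite-word language of an extended regular expression, where
`den` is the denotation function of the predicate algebra. -/
def lang {D P : Type*} (den : P → Set D) : ERE P → Set (List D)
  | .pred α => {u | ∃ a ∈ den α, u = [a]}
  | .eps => {[]}
  | .union r s => lang den r ∪ lang den s
  | .inter r s => lang den r ∩ lang den s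
  | .concat r s => {u | ∃ x ∈ lang den r, ∃ y ∈ lang den s, u = x ++ y}
  | .star r => {u | ∃ L : List (List D), (∀ x ∈ L, x ∈ lang den r) ∧ u = L.flatten}
  | .compl r => (lang den r)ᶜ

/-- Nullability of an extended regular expression. -/
def nullable {P : Type*} : ERE P → Bool
  | .pred _ => false
  | .eps => true
  | .union r s => nullable r || nullable s
  | .inter r s => nullable r && nullable s
  | .concat r s => nullable r && nullable s
  | .star _ => true
  | .compl r => !nullable r

/-- The symbolic derivative of an extended regular expression:
a transition term with regex leaves. -/
noncomputable def derive {D P : Type*} (E : EBA D P) : ERE P → TT P (ERE P)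
  | .eps => .leaf (.pred E.bot)
  | .pred α => .ite α (.leaf .eps) (.leaf (.pred E.bot))
  | .union r s => liftBin ERE.union (derive E r) (derive E s)
  | .inter r s => liftBin ERE.inter (derive E r) (derive E s)
  | .compl r => liftUn ERE.compl (derive E r)
  | .star r => liftUn (fun t => ERE.concat t (.star r)) (derive E r)
  | .concat r s =>
    if nullable r then
      liftBin ERE.union (liftUn (fun t => ERE.concat t s) (derive E r)) (derive E s)
    else liftUn (fun t => ERE.concat t s) (derive E r)

/-!
Induction on `R`. Evaluating a lifted transition term at `a` is the same as applying the
lifted leaf operation to the evaluated leaves, so the claim reduces to Brzozowski's equations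
for the left quotient `Lₐ = {v | a :: v ∈ L}`: it commutes with `+`, `⊓` and complement,
`(L * M)ₐ = Lₐ * M + Mₐ` if `[] ∈ L` and `Lₐ * M` otherwise, and `(L∗)ₐ = Lₐ * L∗`.
-/

open Computability

namespace Language

variable {α : Type*} (l m : Language α) (a : α)

theorem leftQuotient_add : (l + m).leftQuotient [a] = l.leftQuotient [a] + m.leftQuotient [a] :=
  rfl

theorem leftQuotient_inf : (l ⊓ m).leftQuotient [a] = l.leftQuotient [a] ⊓ m.leftQuotient [a] :=
  rfl

theorem leftQuotient_compl : lᶜ.leftQuotient [a] = (l.leftQuotient [a])ᶜ :=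
  rfl

theorem leftQuotient_one : (1 : Language α).leftQuotient [a] = 0 :=
  ext fun _ => iff_of_false (List.cons_ne_nil _ _) (notMem_zero _)

theorem nil_mem_mul_iff : [] ∈ l * m ↔ [] ∈ l ∧ [] ∈ m := by
  simp only [mem_mul, List.append_eq_nil_iff]
  constructor
  · rintro ⟨_, hx, _, hy, rfl, rfl⟩
    exact ⟨hx, hy⟩
  · rintro ⟨hx, hy⟩
    exact ⟨[], hx, [], hy, rfl, rfl⟩

theorem cons_mem_mul_iff (v : List α) :
    a :: v ∈ l * m ↔ v ∈ l.leftQuotient [a] * m ∨ [] ∈ l ∧ a :: v ∈ m := by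
  simp only [mem_mul, mem_leftQuotient, List.singleton_append]
  constructor
  · rintro ⟨_ | ⟨b, x⟩, hx, y, hy, hv⟩
    · exact .inr ⟨hx, hv ▸ hy⟩
    · obtain ⟨rfl, rfl⟩ := List.cons.inj hv
      exact .inl ⟨x, hx, y, hy, rfl⟩
  · rintro (⟨x, hx, y, hy, rfl⟩ | ⟨hl, hm⟩)
    · exact ⟨a :: x, hx, y, hy, rfl⟩
    · exact ⟨[], hl, a :: v, hm, rfl⟩

theorem leftQuotient_mul_of_nil_mem (h : [] ∈ l) :
    (l * m).leftQuotient [a] = l.leftQuotient [a] * m + m.leftQuotient [a] :=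
  ext fun v => (cons_mem_mul_iff l m a v).trans (or_congr_right (and_iff_right h))

theorem leftQuotient_mul_of_nil_notMem (h : [] ∉ l) :
    (l * m).leftQuotient [a] = l.leftQuotient [a] * m :=
  ext fun v => (cons_mem_mul_iff l m a v).trans (or_iff_left fun h' => h h'.1)

theorem leftQuotient_kstar : l∗.leftQuotient [a] = l.leftQuotient [a] * l∗ := by
  ext v
  simp only [mem_leftQuotient, List.singleton_append]
  constructor
  · -- the first factor of a decomposition into nonempty words starts with `a`
    rw [mem_kstar_iff_exists_nonempty]
    rintro ⟨_ | ⟨_ | ⟨b, x⟩, S⟩, hv, hS⟩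
    · cases hv
    · exact absurd rfl (hS [] List.mem_cons_self).2
    obtain ⟨rfl, rfl⟩ := List.cons.inj hv
    exact ⟨x, (hS _ List.mem_cons_self).1, _,
      join_mem_kstar fun y hy => (hS y (List.mem_cons_of_mem _ hy)).1, rfl⟩
  · rintro ⟨x, hx, y, hy, rfl⟩
    rw [← one_add_self_mul_kstar_eq_kstar]
    exact Or.inr (append_mem_mul (a := a :: x) hx hy)

end Language

namespace ERE

variable {D P : Type*} (den : P → Set D)

/-- The set `lang den R`, retyped so that the Kleene algebra structure of `Language D` applies. -/
def language (R : ERE P) : Language D :=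
  lang den R

theorem language_eps : (eps : ERE P).language den = 1 :=
  rfl

theorem language_union (r s : ERE P) :
    (union r s).language den = r.language den + s.language den :=
  rfl

theorem language_inter (r s : ERE P) :
    (inter r s).language den = r.language den ⊓ s.language den :=
  rfl

theorem language_compl (r : ERE P) : (compl r).language den = (r.language den)ᶜ :=
  rfl

theorem language_concat (r s : ERE P) :
    (concat r s).language den = r.language den * s.language den :=
  Language.ext fun _ => by
    rw [Language.mem_mul]
    exact exists_congr fun _ => and_congr_right fun _ =>
      exists_congr fun _ => and_congr_right fun _ => eq_comm

theorem language_star (r : ERE P) : (star r).language den = (r.language den)∗ :=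
  Language.ext fun _ => exists_congr fun _ => and_comm

theorem language_pred_of_den_eq_empty {α : P} (h : den α = ∅) : (pred α).language den = 0 :=
  Language.ext fun _ =>
    iff_of_false (fun ⟨_, hb, _⟩ => (h ▸ hb : _ ∈ (∅ : Set D))) (Language.notMem_zero _)

theorem leftQuotient_language_pred (α : P) (a : D) [Decidable (a ∈ den α)] :
    ((pred α).language den).leftQuotient [a] = if a ∈ den α then 1 else 0 := by
  ext v
  rw [Language.mem_leftQuotient]
  split_ifs with ha
  · rw [Language.mem_one]
    constructor
    · rintro ⟨b, -, hv⟩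
      exact (List.cons.inj hv).2
    · rintro rfl
      exact ⟨a, ha, rfl⟩
  · exact iff_of_false (fun ⟨_, hb, hv⟩ => ha ((List.cons.inj hv).1 ▸ hb))
      (Language.notMem_zero _)

theorem nullable_iff_nil_mem (R : ERE P) : nullable R = true ↔ [] ∈ R.language den := by
  induction R with
  | pred α =>
    exact iff_of_false Bool.false_ne_true fun ⟨_, _, h⟩ => List.cons_ne_nil _ _ h.symm
  | eps => exact iff_of_true rfl rfl
  | union r s ihr ihs =>
    rw [language_union, Language.mem_add, nullable, Bool.or_eq_true, ihr, ihs]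
  | inter r s ihr ihs =>
    rw [language_inter, Language.mem_inf, nullable, Bool.and_eq_true, ihr, ihs]
  | concat r s ihr ihs =>
    rw [language_concat, Language.nil_mem_mul_iff, nullable, Bool.and_eq_true, ihr, ihs]
  | star r => exact iff_of_true rfl ((language_star den r).symm ▸ Language.nil_mem_kstar _)
  | compl r ih =>
    rw [language_compl, nullable, Bool.not_eq_true', ← Bool.not_eq_true, ih]
    rfl

end ERE

theorem leafOf_liftUn {D P Φ Φ' : Type*} (E : EBA D P) (op : Φ → Φ') (f : TT P Φ) (a : D) :
    leafOf E (liftUn op f) a = op (leafOf E f a) := by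
  induction f with
  | leaf φ => rfl
  | ite α f g ihf ihg =>
    simp only [liftUn, leafOf]
    split_ifs <;> assumption

theorem leafOf_liftBin {D P Φ Φ' : Type*} (E : EBA D P) (op : Φ → Φ → Φ')
    (f g : TT P Φ) (a : D) :
    leafOf E (liftBin op f g) a = op (leafOf E f a) (leafOf E g a) := by
  induction f generalizing g with
  | leaf φ =>
    induction g with
    | leaf ψ => simp only [liftBin, leafOf]
    | ite α g g' ihg ihg' =>
      simp only [liftBin, leafOf]
      split_ifs <;> assumption
  | ite α f f' ihf ihf' =>
    simp only [liftBin, leafOf]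
    split_ifs <;> simp only [ihf, ihf']

open ERE Language in
theorem language_leafOf_derive {D P : Type*} (E : EBA D P) (R : ERE P) (a : D) :
    (leafOf E (derive E R) a).language E.den = (R.language E.den).leftQuotient [a] := by
  induction R with
  | pred α =>
    rw [leftQuotient_language_pred, derive, leafOf]
    split_ifs
    · rfl
    · exact language_pred_of_den_eq_empty _ E.den_bot
  | eps => rw [derive, leafOf, language_eps, leftQuotient_one,
      language_pred_of_den_eq_empty _ E.den_bot]
  | union r s ihr ihs =>
    rw [derive, leafOf_liftBin, language_union, language_union, ihr, ihs, leftQuotient_add]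
  | inter r s ihr ihs =>
    rw [derive, leafOf_liftBin, language_inter, language_inter, ihr, ihs, leftQuotient_inf]
  | compl r ih => rw [derive, leafOf_liftUn, language_compl, language_compl, ih, leftQuotient_compl]
  | star r ih =>
    rw [derive, leafOf_liftUn, language_concat, language_star, ih, leftQuotient_kstar]
  | concat r s ihr ihs =>
    rw [derive, language_concat]
    split_ifs with hr
    · rw [leafOf_liftBin, leafOf_liftUn, language_union, language_concat, ihr, ihs,
        leftQuotient_mul_of_nil_mem _ _ _ ((nullable_iff_nil_mem _ r).1 hr)]
    · rw [leafOf_liftUn, language_concat, ihr,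
        leftQuotient_mul_of_nil_notMem _ _ _ (mt (nullable_iff_nil_mem _ r).2 hr)]

/-- Symbolic regex derivatives are correct: the language of the leaf of
`δ(R)` for `a` is the `a`-derivative of the language of `R`. -/
theorem derive_correct {D P : Type*} (E : EBA D P) (R : ERE P) (a : D) :
    lang E.den (leafOf E (derive E R) a) = {v | a :: v ∈ lang E.den R} :=
  language_leafOf_derive E R a
end

section
/- For any extended regular expression R and infinite word w: w satisfies the weak closure of R if and only if (some prefix of w, under the relation ⪯', is a minimal word of L(R)) or (every nonempty proper prefix u of w can be extended to a word u·x in L(R)). -/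
/-- `x ⪯' u` on finite words: nonempty proper prefix, or `x = ε ≠ u`. -/
def precE {D : Type*} (x u : List D) : Prop :=
  (x ≠ [] ∧ x <+: u ∧ x ≠ u) ∨ (x = [] ∧ u ≠ [])

/-- The minimal words of a language: members with no prefix (under `⪯'`)
in the language. -/
def MinSet {D : Type*} (L : Set (List D)) : Set (List D) :=
  {u | u ∈ L ∧ ¬ ∃ x, precE x u ∧ x ∈ L}

/-- The finite prefix of length `n` of an infinite word. -/
def prefixOf {D : Type*} (w : ℕ → D) (n : ℕ) : List D := (List.range n).map w

/-- `u ≺ w`: `u` is a nonempty finite prefix of the infinite word `w`. -/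
def precInf {D : Type*} (u : List D) (w : ℕ → D) : Prop :=
  ∃ n, 0 < n ∧ u = prefixOf w n

/-- `u ⪯' w`: `u ≺ w` or `u = ε`. -/
def precEInf {D : Type*} (u : List D) (w : ℕ → D) : Prop := precInf u w ∨ u = []

/-- Semantics of the weak closure `wcl(R)` on infinite words. -/
def wclSat {D : Type*} (L : Set (List D)) (w : ℕ → D) : Prop :=
  (∃ u, precEInf u w ∧ u ∈ L) ∨ (∀ u, precInf u w → ∃ x, u ++ x ∈ L)

/-! The `⪯'`-prefixes of `w` are the words `prefixOf w n`, and the `⪯'`-predecessors of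
`prefixOf w n` are exactly the `prefixOf w m` with `m < n`; so if some prefix of `w` lies in
`L`, the one of least length is a minimal word of `L`. -/

section Prefixes

variable {D : Type*}

theorem precE_iff {x u : List D} : precE x u ↔ x <+: u ∧ x ≠ u := by
  rcases x.eq_nil_or_concat with rfl | ⟨y, a, rfl⟩
  · simp [precE, eq_comm]
  · simp [precE]

theorem length_prefixOf (w : ℕ → D) (n : ℕ) : (prefixOf w n).length = n := by
  simp [prefixOf]

theorem prefixOf_injective (w : ℕ → D) : Function.Injective (prefixOf w) := fun m n h => by
  simpa only [length_prefixOf] using congrArg List.length h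

theorem take_prefixOf (w : ℕ → D) {m n : ℕ} (h : m ≤ n) :
    (prefixOf w n).take m = prefixOf w m := by
  simp [prefixOf, List.take_range, ← List.map_take, h]

theorem isPrefix_prefixOf_iff {w : ℕ → D} {x : List D} {n : ℕ} :
    x <+: prefixOf w n ↔ ∃ m ≤ n, x = prefixOf w m := by
  constructor
  · intro h
    have hlen : x.length ≤ n := length_prefixOf w n ▸ h.length_le
    exact ⟨x.length, hlen, (List.prefix_iff_eq_take.mp h).trans (take_prefixOf w hlen)⟩
  · rintro ⟨m, hmn, rfl⟩
    exact take_prefixOf w hmn ▸ List.take_prefix m _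

theorem precE_prefixOf_iff {w : ℕ → D} {x : List D} {n : ℕ} :
    precE x (prefixOf w n) ↔ ∃ m < n, x = prefixOf w m := by
  simp only [precE_iff, isPrefix_prefixOf_iff, lt_iff_le_and_ne]
  constructor
  · rintro ⟨⟨m, hmn, rfl⟩, hne⟩
    exact ⟨m, ⟨hmn, fun h => hne (h ▸ rfl)⟩, rfl⟩
  · rintro ⟨m, ⟨hmn, hne⟩, rfl⟩
    exact ⟨⟨m, hmn, rfl⟩, (prefixOf_injective w).ne hne⟩

theorem precEInf_iff {u : List D} {w : ℕ → D} : precEInf u w ↔ ∃ n, u = prefixOf w n := by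
  constructor
  · rintro (⟨n, -, rfl⟩ | rfl)
    exacts [⟨n, rfl⟩, ⟨0, rfl⟩]
  · rintro ⟨_ | n, rfl⟩
    exacts [Or.inr rfl, Or.inl ⟨n + 1, n.succ_pos, rfl⟩]

end Prefixes

theorem prefixOf_find_mem_minSet {D : Type*} {L : Set (List D)} {w : ℕ → D}
    [DecidablePred fun n => prefixOf w n ∈ L] (h : ∃ n, prefixOf w n ∈ L) :
    prefixOf w (Nat.find h) ∈ MinSet L := by
  refine ⟨Nat.find_spec h, ?_⟩
  rintro ⟨x, hx, hxL⟩
  obtain ⟨m, hm, rfl⟩ := precE_prefixOf_iff.mp hx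
  exact Nat.find_min h hm hxL

theorem exists_precEInf_mem_minSet_iff {D : Type*} (L : Set (List D)) (w : ℕ → D) :
    (∃ u, precEInf u w ∧ u ∈ MinSet L) ↔ ∃ u, precEInf u w ∧ u ∈ L := by
  classical
  refine ⟨fun ⟨u, hu, huL⟩ => ⟨u, hu, huL.1⟩, fun ⟨u, hu, huL⟩ => ?_⟩
  obtain ⟨n, rfl⟩ := precEInf_iff.mp hu
  exact ⟨_, precEInf_iff.mpr ⟨_, rfl⟩, prefixOf_find_mem_minSet ⟨n, huL⟩⟩

/-- `w ⊨ wcl(R)` iff some prefix of `w` (under `⪯'`) is a *minimal* word of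
`L(R)`, or every nonempty proper prefix of `w` extends to a word of `L(R)`. -/
theorem wcl_min_prefix {D P : Type*} (den : P → Set D) (R : ERE P) (w : ℕ → D) :
    wclSat (lang den R) w ↔
      ((∃ u, precEInf u w ∧ u ∈ MinSet (lang den R)) ∨
       (∀ u, precInf u w → ∃ x, u ++ x ∈ lang den R)) := by
  rw [wclSat, exists_precEInf_mem_minSet_iff]
end
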